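/- The language of exo-stratified formulae in the enriched syntax of set theory is context-free. -/

import Mathlib

/-- Alphabet of the enriched syntax of set theory. -/
inductive EAlph : Type
  | lb | rb | imp | all | deq | mem | v | prime | star | bot
deriving DecidableEq

/-- Formulae of the enriched syntax; a variable `v_n^m` is the pair `(n, m)`
(`n` apostrophes, `m` stars). -/
inductive EFm : Type
  | bot : EFm
  | eq : ℕ × ℕ → ℕ × ℕ → EFm
  | mem : ℕ × ℕ → ℕ × ℕ → EFm
  | imp : EFm → EFm → EFm
  | all : ℕ × ℕ → EFm → EFm
deriving DecidableEq

/-- The string of the variable `v_n^m`. -/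
def evarStr (p : ℕ × ℕ) : List EAlph :=
  EAlph.v :: (List.replicate p.1 EAlph.prime ++ List.replicate p.2 EAlph.star)

/-- The string of symbols of an enriched-syntax formula. -/
def EFm.str : EFm → List EAlph
  | .bot => [EAlph.bot]
  | .eq x y => evarStr x ++ [EAlph.deq] ++ evarStr y
  | .mem x y => evarStr x ++ [EAlph.mem] ++ evarStr y
  | .imp φ ψ => [EAlph.lb] ++ φ.str ++ [EAlph.imp] ++ ψ.str ++ [EAlph.rb]
  | .all x φ => [EAlph.lb, EAlph.all] ++ evarStr x ++ [EAlph.rb] ++ φ.str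

/-- Pairs of variables `(x, y)` with `x ∈ y` an atomic subformula. -/
def EFm.memPairs : EFm → Finset ((ℕ × ℕ) × (ℕ × ℕ))
  | .bot => ∅
  | .eq _ _ => ∅
  | .mem x y => {(x, y)}
  | .imp φ ψ => φ.memPairs ∪ ψ.memPairs
  | .all _ φ => φ.memPairs

/-- Pairs of variables `(x, y)` with `x ≐ y` an atomic subformula. -/
def EFm.eqPairs : EFm → Finset ((ℕ × ℕ) × (ℕ × ℕ))
  | .bot => ∅
  | .eq x y => {(x, y)}
  | .mem _ _ => ∅
  | .imp φ ψ => φ.eqPairs ∪ ψ.eqPairs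
  | .all _ φ => φ.eqPairs

/-- A formula is exo-stratified if subformulae `v_{n1}^{m1} ≐ v_{n2}^{m2}` have `m1 = m2`
and subformulae `v_{n1}^{m1} ∈ v_{n2}^{m2}` have `m1 + 1 = m2`. -/
def EFm.ExoStratified (φ : EFm) : Prop :=
  (∀ p ∈ φ.eqPairs, p.1.2 = p.2.2) ∧ (∀ p ∈ φ.memPairs, p.1.2 + 1 = p.2.2)

/-- `σ` is a stratification of `φ`. -/
def EFm.IsStratification (σ : ℕ × ℕ → ℤ) (φ : EFm) : Prop :=
  (∀ p ∈ φ.memPairs, σ p.1 = σ p.2 - 1) ∧ (∀ p ∈ φ.eqPairs, σ p.1 = σ p.2)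

/-- A formula of the enriched syntax is stratified if it has a stratification. -/
def EFm.Stratified (φ : EFm) : Prop := ∃ σ : ℕ × ℕ → ℤ, φ.IsStratification σ

/-
An exo-stratified formula constrains the stars only within each atomic formula: both sides
of `x ≐ y` carry the same number of stars, and in `x ∈ y` the right side carries one more.
Such a matched count is context-free, as for `aⁿbⁿ`: in `v′ᵏ⋆ᵐ ≐ v′ˡ⋆ᵐ` the stars of the
two variables are produced in pairs by `eqTail → ⋆ eqTail ⋆` around the core `≐ v′ˡ`.
Correctness is the invariant argument: reading each nonterminal as its intended language,
every production is sound, so every derivable word is an exo-stratified formula; conversely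
every word of an intended language is derived, by induction on the formula and on the
number of stars.
-/

-- Spelled out with `@`: the ascription `({w | p w} : Language α)` would elaborate to `Set`'s `∈`.
@[simp]
lemma Language.mem_setOf {α : Type*} {p : List α → Prop} {w : List α} :
    @Membership.mem (List α) (Language α) _ {w | p w} w ↔ p w :=
  Iff.rfl

namespace ContextFreeGrammar

section SententialForms

variable {T N : Type*} (L : N → Language T)

def symbolLanguage : Symbol T N → Language T
  | .terminal a => {[a]}
  | .nonterminal n => L n

def formLanguage (u : List (Symbol T N)) : Language T :=
  (u.map (symbolLanguage L)).prod

variable {L}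

@[simp]
lemma mem_symbolLanguage_terminal {a : T} {w : List T} :
    w ∈ symbolLanguage L (.terminal a) ↔ w = [a] :=
  Iff.rfl

@[simp]
lemma symbolLanguage_nonterminal (n : N) : symbolLanguage L (.nonterminal n) = L n :=
  rfl

@[simp]
lemma mem_formLanguage_nil {w : List T} : w ∈ formLanguage L [] ↔ w = [] :=
  Iff.rfl

@[simp]
lemma mem_formLanguage_cons {s : Symbol T N} {u : List (Symbol T N)} {w : List T} :
    w ∈ formLanguage L (s :: u) ↔
      ∃ a ∈ symbolLanguage L s, ∃ b ∈ formLanguage L u, a ++ b = w :=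
  Language.mem_mul

@[simp]
lemma formLanguage_singleton (s : Symbol T N) : formLanguage L [s] = symbolLanguage L s :=
  mul_one _

lemma formLanguage_append (u v : List (Symbol T N)) :
    formLanguage L (u ++ v) = formLanguage L u * formLanguage L v := by
  simp only [formLanguage, List.map_append, List.prod_append]

lemma mem_formLanguage_map_terminal (w : List T) : w ∈ formLanguage L (w.map .terminal) := by
  induction w with
  | nil => exact Language.nil_mem_one
  | cons a w ih => exact Language.append_mem_mul (a := [a]) rfl ih

end SententialForms

variable {T : Type*} {g : ContextFreeGrammar T} {L : g.NT → Language T}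
  {u v : List (Symbol T g.NT)}

lemma Produces.formLanguage_le (hL : ∀ r ∈ g.rules, formLanguage L r.output ≤ L r.input)
    (h : g.Produces u v) : formLanguage L v ≤ formLanguage L u := by
  obtain ⟨r, hr, hrw⟩ := h
  obtain ⟨p, q, rfl, rfl⟩ := hrw.exists_parts
  simp only [formLanguage_append, formLanguage_singleton, symbolLanguage_nonterminal]
  gcongr
  exact hL r hr

lemma Derives.formLanguage_le (hL : ∀ r ∈ g.rules, formLanguage L r.output ≤ L r.input)
    (h : g.Derives u v) : formLanguage L v ≤ formLanguage L u := by
  induction h with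
  | refl => exact le_rfl
  | tail _ hvw ih => exact (hvw.formLanguage_le hL).trans ih

theorem language_le_of_forall_rules (hL : ∀ r ∈ g.rules, formLanguage L r.output ≤ L r.input) :
    g.language ≤ L g.initial := fun w hw => by
  simpa using Derives.formLanguage_le hL hw (mem_formLanguage_map_terminal w)

variable (g) in
def languageFrom (n : g.NT) : Language T :=
  {w | g.Derives [.nonterminal n] (w.map .terminal)}

lemma derives_of_mem_formLanguage_languageFrom {w : List T}
    (hw : w ∈ formLanguage g.languageFrom u) : g.Derives u (w.map .terminal) := by
  induction u generalizing w with
  | nil => obtain rfl : w = [] := hw; exact Derives.refl _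
  | cons s u ih =>
    obtain ⟨w₁, hw₁, w₂, hw₂, rfl⟩ := mem_formLanguage_cons.mp hw
    have hs : g.Derives [s] (w₁.map .terminal) := by
      cases s with
      | terminal a => obtain rfl : w₁ = [a] := hw₁; exact Derives.refl _
      | nonterminal n => exact hw₁
    simpa using (hs.append_right u).trans ((ih hw₂).append_left _)

lemma mem_languageFrom_of_mem_rules {n : g.NT} {w : List T} (hr : ⟨n, u⟩ ∈ g.rules)
    (hw : w ∈ formLanguage g.languageFrom u) : w ∈ g.languageFrom n :=
  Produces.trans_derives ⟨_, hr, .input_output⟩ (derives_of_mem_formLanguage_languageFrom hw)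

end ContextFreeGrammar

lemma evarStr_append_star (k m : ℕ) : evarStr (k, m) ++ [EAlph.star] = evarStr (k, m + 1) := by
  simp [evarStr, List.replicate_succ']

lemma evarStr_zero_append_replicate_star (k m : ℕ) :
    evarStr (k, 0) ++ List.replicate m EAlph.star = evarStr (k, m) := by
  simp [evarStr]

namespace EFm

@[simp]
lemma exoStratified_bot : EFm.bot.ExoStratified := by
  simp [ExoStratified, eqPairs, memPairs]

@[simp]
lemma exoStratified_eq {x y : ℕ × ℕ} : (eq x y).ExoStratified ↔ x.2 = y.2 := by
  simp [ExoStratified, eqPairs, memPairs]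

@[simp]
lemma exoStratified_mem {x y : ℕ × ℕ} : (mem x y).ExoStratified ↔ x.2 + 1 = y.2 := by
  simp [ExoStratified, eqPairs, memPairs]

@[simp]
lemma exoStratified_imp {φ ψ : EFm} :
    (imp φ ψ).ExoStratified ↔ φ.ExoStratified ∧ ψ.ExoStratified := by
  simp only [ExoStratified, eqPairs, memPairs, Finset.mem_union]
  grind

@[simp]
lemma exoStratified_all {x : ℕ × ℕ} {φ : EFm} : (all x φ).ExoStratified ↔ φ.ExoStratified :=
  Iff.rfl

end EFm

namespace ExoStratifiedCFG

open EAlph ContextFreeGrammar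

inductive NT
  | formula | var | unstarredVar | eqTail | memTail
deriving DecidableEq

open NT

def rules : Finset (ContextFreeRule EAlph NT) :=
  { ⟨formula, [.terminal bot]⟩,
    ⟨formula, [.nonterminal unstarredVar, .nonterminal eqTail]⟩,
    ⟨formula, [.nonterminal unstarredVar, .nonterminal memTail]⟩,
    ⟨formula,
      [.terminal lb, .nonterminal formula, .terminal imp, .nonterminal formula, .terminal rb]⟩,
    ⟨formula,
      [.terminal lb, .terminal all, .nonterminal var, .terminal rb, .nonterminal formula]⟩,
    ⟨unstarredVar, [.terminal v]⟩,
    ⟨unstarredVar, [.nonterminal unstarredVar, .terminal prime]⟩,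
    ⟨var, [.nonterminal unstarredVar]⟩,
    ⟨var, [.nonterminal var, .terminal star]⟩,
    ⟨eqTail, [.terminal deq, .nonterminal unstarredVar]⟩,
    ⟨eqTail, [.terminal star, .nonterminal eqTail, .terminal star]⟩,
    ⟨memTail, [.terminal mem, .nonterminal unstarredVar, .terminal star]⟩,
    ⟨memTail, [.terminal star, .nonterminal memTail, .terminal star]⟩ }

abbrev grammar : ContextFreeGrammar EAlph := ⟨NT, formula, rules⟩

def intendedLanguage : NT → Language EAlph
  | formula => {w | ∃ φ : EFm, φ.ExoStratified ∧ φ.str = w}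
  | var => {w | ∃ x, evarStr x = w}
  | unstarredVar => {w | ∃ k, evarStr (k, 0) = w}
  | eqTail => {w | ∃ k m, List.replicate m star ++ deq :: evarStr (k, m) = w}
  | memTail => {w | ∃ k m, List.replicate m star ++ mem :: evarStr (k, m + 1) = w}

lemma formLanguage_intendedLanguage_output_le {r : ContextFreeRule EAlph NT} (hr : r ∈ rules) :
    formLanguage intendedLanguage r.output ≤ intendedLanguage r.input := by
  -- `≤` on `Language` unfolds to `Set`'s `∈`, which the membership lemmas do not match
  intro w (hw : w ∈ formLanguage _ _)
  show w ∈ intendedLanguage r.input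
  simp only [rules, Finset.mem_insert, Finset.mem_singleton] at hr
  rcases hr with rfl | rfl | rfl | rfl | rfl | rfl | rfl | rfl | rfl | rfl | rfl | rfl | rfl <;>
    simp [intendedLanguage] at hw ⊢
  · exact ⟨.bot, EFm.exoStratified_bot, hw.symm⟩
  · obtain ⟨k, k', m, rfl⟩ := hw
    exact ⟨.eq (k, m) (k', m), by simp, by simp [EFm.str, evarStr]⟩
  · obtain ⟨k, k', m, rfl⟩ := hw
    exact ⟨.mem (k, m) (k', m + 1), by simp, by simp [EFm.str, evarStr]⟩
  · obtain ⟨φ, hφ, ψ, hψ, rfl⟩ := hw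
    exact ⟨.imp φ ψ, by simp [hφ, hψ], by simp [EFm.str]⟩
  · obtain ⟨k, m, φ, hφ, rfl⟩ := hw
    exact ⟨.all (k, m) φ, by simpa, by simp [EFm.str]⟩
  · exact ⟨0, by simp [evarStr, hw]⟩
  · obtain ⟨k, rfl⟩ := hw
    exact ⟨k + 1, by simp [evarStr, List.replicate_succ']⟩
  · obtain ⟨k, rfl⟩ := hw
    exact ⟨k, 0, rfl⟩
  · obtain ⟨k, m, rfl⟩ := hw
    exact ⟨k, m + 1, (evarStr_append_star k m).symm⟩
  · obtain ⟨k, rfl⟩ := hw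
    exact ⟨k, 0, rfl⟩
  · obtain ⟨k, m, rfl⟩ := hw
    exact ⟨k, m + 1, by simp [List.replicate_succ, evarStr_append_star]⟩
  · obtain ⟨k, rfl⟩ := hw
    exact ⟨k, 0, by simp [evarStr_append_star]⟩
  · obtain ⟨k, m, rfl⟩ := hw
    exact ⟨k, m + 1, by simp [List.replicate_succ, evarStr_append_star]⟩

lemma evarStr_zero_mem_languageFrom (k : ℕ) :
    evarStr (k, 0) ∈ grammar.languageFrom unstarredVar := by
  induction k with
  | zero =>
    exact mem_languageFrom_of_mem_rules (u := [.terminal v]) (by decide) (by simp [evarStr])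
  | succ k ih =>
    refine mem_languageFrom_of_mem_rules (u := [.nonterminal unstarredVar, .terminal prime])
      (by decide) ?_
    simpa using ⟨_, ih, by simp [evarStr, List.replicate_succ']⟩

lemma evarStr_mem_languageFrom (k m : ℕ) : evarStr (k, m) ∈ grammar.languageFrom var := by
  induction m with
  | zero =>
    refine mem_languageFrom_of_mem_rules (u := [.nonterminal unstarredVar]) (by decide) ?_
    simpa using evarStr_zero_mem_languageFrom k
  | succ m ih =>
    refine mem_languageFrom_of_mem_rules (u := [.nonterminal var, .terminal EAlph.star])
      (by decide) ?_
    simpa using ⟨_, ih, evarStr_append_star k m⟩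

lemma eqTail_mem_languageFrom (k m : ℕ) :
    List.replicate m star ++ deq :: evarStr (k, m) ∈ grammar.languageFrom eqTail := by
  induction m with
  | zero =>
    refine mem_languageFrom_of_mem_rules (u := [.terminal deq, .nonterminal unstarredVar])
      (by decide) ?_
    simpa using evarStr_zero_mem_languageFrom k
  | succ m ih =>
    refine mem_languageFrom_of_mem_rules
      (u := [.terminal EAlph.star, .nonterminal eqTail, .terminal EAlph.star]) (by decide) ?_
    simpa using ⟨_, ih, by simp [List.replicate_succ, ← evarStr_append_star]⟩

lemma memTail_mem_languageFrom (k m : ℕ) :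
    List.replicate m star ++ mem :: evarStr (k, m + 1) ∈ grammar.languageFrom memTail := by
  induction m with
  | zero =>
    refine mem_languageFrom_of_mem_rules
      (u := [.terminal mem, .nonterminal unstarredVar, .terminal EAlph.star]) (by decide) ?_
    simpa using ⟨_, evarStr_zero_mem_languageFrom k, evarStr_append_star k 0⟩
  | succ m ih =>
    refine mem_languageFrom_of_mem_rules
      (u := [.terminal EAlph.star, .nonterminal memTail, .terminal EAlph.star]) (by decide) ?_
    simpa using ⟨_, ih, by simp [List.replicate_succ, ← evarStr_append_star]⟩

lemma str_mem_languageFrom {φ : EFm} (hφ : φ.ExoStratified) :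
    φ.str ∈ grammar.languageFrom formula := by
  induction φ with
  | bot =>
    exact mem_languageFrom_of_mem_rules (u := [.terminal bot]) (by decide) (by simp [EFm.str])
  | eq x y =>
    obtain ⟨k, m⟩ := x
    obtain ⟨k', m'⟩ := y
    obtain rfl : m = m' := EFm.exoStratified_eq.mp hφ
    refine mem_languageFrom_of_mem_rules
      (u := [.nonterminal unstarredVar, .nonterminal eqTail]) (by decide) ?_
    simpa [EFm.str] using ⟨_, evarStr_zero_mem_languageFrom k, _, eqTail_mem_languageFrom k' m,
      by simp [← evarStr_zero_append_replicate_star k m]⟩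
  | mem x y =>
    obtain ⟨k, m⟩ := x
    obtain ⟨k', m'⟩ := y
    obtain rfl : m + 1 = m' := EFm.exoStratified_mem.mp hφ
    refine mem_languageFrom_of_mem_rules
      (u := [.nonterminal unstarredVar, .nonterminal memTail]) (by decide) ?_
    simpa [EFm.str] using ⟨_, evarStr_zero_mem_languageFrom k, _, memTail_mem_languageFrom k' m,
      by simp [← evarStr_zero_append_replicate_star k m]⟩
  | imp φ ψ ihφ ihψ =>
    rw [EFm.exoStratified_imp] at hφ
    refine mem_languageFrom_of_mem_rules
      (u := [.terminal lb, .nonterminal formula, .terminal imp, .nonterminal formula, .terminal rb])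
      (by decide) ?_
    simpa [EFm.str] using ⟨_, ihφ hφ.1, _, ihψ hφ.2, rfl⟩
  | all x φ ih =>
    refine mem_languageFrom_of_mem_rules
      (u := [.terminal lb, .terminal all, .nonterminal var, .terminal rb, .nonterminal formula])
      (by decide) ?_
    simpa [EFm.str] using ⟨_, evarStr_mem_languageFrom x.1 x.2, _, ih hφ, rfl⟩

theorem language_grammar :
    grammar.language = {w | ∃ φ : EFm, φ.ExoStratified ∧ φ.str = w} := by
  refine le_antisymm (language_le_of_forall_rules (g := grammar) (L := intendedLanguage)
    fun _ => formLanguage_intendedLanguage_output_le) ?_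
  rintro _ ⟨φ, hφ, rfl⟩
  exact str_mem_languageFrom hφ

end ExoStratifiedCFG

/-- The language of exo-stratified formulae in the enriched syntax is context-free. -/
theorem exoStratified_isContextFree :
    Language.IsContextFree {s : List EAlph | ∃ φ : EFm, φ.ExoStratified ∧ φ.str = s} :=
  ⟨ExoStratifiedCFG.grammar, ExoStratifiedCFG.language_grammar⟩
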